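/- Fix an integer ℓ ≥ 0 and an integer N ≥ 2^{ℓ+1}. Then for every nonzero integer j, one has E(j; N) ≤ 2^{ℓ+8}. -/

import Mathlib

/-!
With `θ = jα` the sum is geometric, so `|S| · |sin πθ| = |sin πKθ|`. Since `1 ≤ Kα < 1 + α`, the
point `Kθ` lies within `|j|α` of the integer `j`; hence `|S| ≤ π/2` as long as `|j|α ≤ 1/2`, which
settles the case `|j| · 2^ℓ/N ≤ 1/4`. Otherwise we only use `|S| ≤ K ≤ 2/α` and `|S| ≤ 1/|sin πθ|`:
with `a = 2^ℓ/N` and `C = 2/a`, `|S|²` is dominated by the `1`-periodic function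
`2C² / (1 + C² sin² πβ)` at `β = |j|α`. Comparing with `2C² / (1 + 4C²β²)` on `[-1/2, 1/2]` bounds
its integral over a period by `πC`, and after the substitution `β = |j|α` the range
`[|j|a, 2|j|a]` meets at most `|j|a + 2` periods, giving `E ≤ 18π`.
-/

open MeasureTheory

noncomputable def e (t : ℝ) : ℂ := Complex.exp (2 * Real.pi * Complex.I * t)

noncomputable def K (α : ℝ) : ℕ := ⌈1 / α⌉₊

noncomputable def E (ℓ N : ℕ) (j : ℤ) : ℝ :=
  ∫ α in ((2:ℝ)^ℓ / N)..((2:ℝ)^(ℓ+1) / N),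
    ‖∑ k ∈ Finset.range (K α), e ((j : ℝ) * ((k : ℝ) * α))‖ ^ 2

open Real Finset intervalIntegral Function

lemma two_mul_abs_le_abs_sin_pi_mul {x : ℝ} (hx : |x| ≤ 1 / 2) : 2 * |x| ≤ |sin (π * x)| := by
  have h := mul_abs_le_abs_sin (x := π * x)
    (by rw [abs_mul, abs_of_pos pi_pos]; nlinarith [pi_pos])
  rwa [abs_mul, abs_of_pos pi_pos, ← mul_assoc, div_mul_cancel₀ _ pi_ne_zero] at h

lemma abs_sin_pi_mul_abs (x : ℝ) : |sin (π * |x|)| = |sin (π * x)| := by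
  rcases abs_choice x with h | h <;> simp [h, sin_neg]

lemma intervalIntegral.integral_mono_on_of_nonneg {f g : ℝ → ℝ} {a b : ℝ} (hab : a ≤ b)
    (hf : ∀ x ∈ Set.Icc a b, 0 ≤ f x) (hg : IntervalIntegrable g volume a b)
    (hfg : ∀ x ∈ Set.Icc a b, f x ≤ g x) : ∫ x in a..b, f x ≤ ∫ x in a..b, g x := by
  rw [integral_of_le hab, integral_of_le hab]
  refine integral_mono_of_nonneg ?_ hg.1 ?_ <;>
    filter_upwards [ae_restrict_mem measurableSet_Ioc] with x hx
  exacts [hf x (Set.Ioc_subset_Icc_self hx), hfg x (Set.Ioc_subset_Icc_self hx)]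

lemma Function.Periodic.intervalIntegral_le_of_nonneg {g : ℝ → ℝ} {T : ℝ} (hg : Periodic g T)
    (hT : 0 < T) (hint : ∀ a b, IntervalIntegrable g volume a b) (hg0 : ∀ x, 0 ≤ g x)
    {u v : ℝ} (huv : u ≤ v) :
    ∫ x in u..v, g x ≤ ((v - u) / T + 2) * ∫ x in 0..T, g x := by
  set n₀ := ⌊u / T⌋
  set n₁ := ⌈v / T⌉
  have hn₀ : n₀ * T ≤ u := (le_div_iff₀ hT).mp (Int.floor_le _)
  have hn₁ : v ≤ n₁ * T := (div_le_iff₀ hT).mp (Int.le_ceil _)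
  have hcover : n₀ * T + (n₁ - n₀) • T = n₁ * T := by rw [zsmul_eq_mul]; push_cast; ring
  have hcount : ((n₁ - n₀ : ℤ) : ℝ) ≤ (v - u) / T + 2 := by
    have := Int.ceil_lt_add_one (v / T)
    have := Int.sub_one_lt_floor (u / T)
    push_cast
    rw [sub_div]
    linarith
  calc ∫ x in u..v, g x ≤ ∫ x in n₀ * T..n₀ * T + (n₁ - n₀) • T, g x := by
        rw [hcover]
        exact integral_mono_interval hn₀ huv hn₁ (Filter.Eventually.of_forall hg0) (hint _ _)
    _ = ((n₁ - n₀ : ℤ) : ℝ) * ∫ x in 0..T, g x := by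
        rw [hg.intervalIntegral_add_zsmul_eq _ _ hint, hg.intervalIntegral_add_eq _ 0, zero_add,
          zsmul_eq_mul]
    _ ≤ ((v - u) / T + 2) * ∫ x in 0..T, g x :=
        mul_le_mul_of_nonneg_right hcount (integral_nonneg hT.le fun x _ ↦ hg0 x)

lemma norm_e_sub_one (t : ℝ) : ‖e t - 1‖ = 2 * |sin (π * t)| := by
  have h := Complex.norm_exp_I_mul_ofReal_sub_one (2 * π * t)
  rw [show Complex.I * ((2 * π * t : ℝ) : ℂ) = 2 * π * Complex.I * t by push_cast; ring] at h
  rw [e, h, norm_mul, Real.norm_eq_abs, Real.norm_eq_abs, abs_two]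
  ring_nf

lemma e_nat_mul (k : ℕ) (t : ℝ) : e (k * t) = e t ^ k := by
  rw [e, e, ← Complex.exp_nat_mul]
  push_cast
  ring_nf

lemma norm_e (t : ℝ) : ‖e t‖ = 1 := by
  rw [e, show 2 * π * Complex.I * t = ((2 * π * t : ℝ) : ℂ) * Complex.I by push_cast; ring]
  exact Complex.norm_exp_ofReal_mul_I _

lemma norm_geom_sum_mul_norm_sub_one {𝕜 : Type*} [NormedDivisionRing 𝕜] (z : 𝕜) (n : ℕ) :
    ‖∑ k ∈ range n, z ^ k‖ * ‖z - 1‖ = ‖z ^ n - 1‖ := by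
  rw [← norm_mul, geom_sum_mul]

lemma norm_sum_e_mul_abs_sin (n : ℕ) (θ : ℝ) :
    ‖∑ k ∈ range n, e (k * θ)‖ * |sin (π * θ)| = |sin (π * (n * θ))| := by
  have h := norm_geom_sum_mul_norm_sub_one (e θ) n
  simp only [← e_nat_mul, norm_e_sub_one] at h
  linarith

lemma norm_sum_e_le (n : ℕ) (θ : ℝ) : ‖∑ k ∈ range n, e (k * θ)‖ ≤ n :=
  (norm_sum_le _ _).trans (by simp [norm_e])

lemma one_le_K_mul {α : ℝ} (hα : 0 < α) : 1 ≤ K α * α := by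
  rw [K, ← div_le_iff₀ hα]
  exact Nat.le_ceil _

lemma K_mul_lt {α : ℝ} (hα : 0 < α) : K α * α < 1 + α := by
  have h : (K α : ℝ) < 1 / α + 1 := Nat.ceil_lt_add_one (by positivity)
  calc (K α : ℝ) * α < (1 / α + 1) * α := by gcongr
    _ = 1 + α := by field_simp

lemma K_le_two_div {α : ℝ} (hα : 0 < α) (hα1 : α ≤ 1) : (K α : ℝ) ≤ 2 / α := by
  rw [le_div_iff₀ hα]
  linarith [K_mul_lt hα]

lemma abs_sin_pi_mul_int_mul_K_mul_le (j : ℤ) {α : ℝ} (hα : 0 < α) :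
    |sin (π * (j * (K α * α)))| ≤ π * |(j : ℝ)| * α := by
  have hδ : 0 ≤ K α * α - 1 := by linarith [one_le_K_mul hα]
  calc |sin (π * (j * (K α * α)))| = |sin (π * (j * (K α * α - 1)) + j * π)| := by ring_nf
    _ = |sin (π * (j * (K α * α - 1)))| := by
      rw [sin_add_int_mul_pi, abs_mul, abs_neg_one_zpow, one_mul]
    _ ≤ |π * (j * (K α * α - 1))| := abs_sin_le_abs
    _ = π * |(j : ℝ)| * (K α * α - 1) := by
      rw [abs_mul, abs_mul, abs_of_pos pi_pos, abs_of_nonneg hδ, mul_assoc]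
    _ ≤ π * |(j : ℝ)| * α := by gcongr; linarith [K_mul_lt hα]

noncomputable def expSum (j : ℤ) (α : ℝ) : ℝ := ‖∑ k ∈ range (K α), e (j * (k * α))‖

lemma expSum_nonneg (j : ℤ) (α : ℝ) : 0 ≤ expSum j α := norm_nonneg _

lemma expSum_mul_abs_sin (j : ℤ) (α : ℝ) :
    expSum j α * |sin (π * (j * α))| = |sin (π * (j * (K α * α)))| := by
  rw [expSum, ← mul_left_comm (K α : ℝ)]
  simp_rw [mul_left_comm (j : ℝ)]
  exact norm_sum_e_mul_abs_sin _ _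

lemma expSum_le_K (j : ℤ) (α : ℝ) : expSum j α ≤ K α := by
  rw [expSum]
  simp_rw [mul_left_comm (j : ℝ)]
  exact norm_sum_e_le _ _

lemma expSum_le_pi_div_two {j : ℤ} (hj : j ≠ 0) {α : ℝ} (hα : 0 < α)
    (hsmall : |(j : ℝ)| * α ≤ 1 / 2) : expSum j α ≤ π / 2 := by
  have hjα : 0 < |(j : ℝ)| * α := by positivity
  have hsin : 2 * (|(j : ℝ)| * α) ≤ |sin (π * (j * α))| := by
    simpa [abs_mul, abs_of_pos hα] using
      two_mul_abs_le_abs_sin_pi_mul (x := j * α) (by rwa [abs_mul, abs_of_pos hα])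
  have hS := expSum_nonneg j α
  refine le_of_mul_le_mul_right ?_ (mul_pos two_pos hjα)
  calc expSum j α * (2 * (|(j : ℝ)| * α)) ≤ expSum j α * |sin (π * (j * α))| := by gcongr
    _ = |sin (π * (j * (K α * α)))| := expSum_mul_abs_sin j α
    _ ≤ π * |(j : ℝ)| * α := abs_sin_pi_mul_int_mul_K_mul_le j hα
    _ = π / 2 * (2 * (|(j : ℝ)| * α)) := by ring

/-- A continuous `1`-periodic majorant of `min (C², 1 / sin² πβ)` (see `sq_le_sinPeak`). -/
noncomputable def sinPeak (C β : ℝ) : ℝ := 2 * C ^ 2 / (1 + C ^ 2 * sin (π * β) ^ 2)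

section sinPeak

variable {C : ℝ}

lemma sinPeak_nonneg (C β : ℝ) : 0 ≤ sinPeak C β := by unfold sinPeak; positivity

lemma continuous_sinPeak (C : ℝ) : Continuous (sinPeak C) :=
  continuous_const.div (by fun_prop) fun _ ↦ by positivity

lemma periodic_sinPeak (C : ℝ) : Periodic (sinPeak C) 1 := fun β ↦ by
  rw [sinPeak, sinPeak, mul_add, mul_one, sin_add_pi, neg_sq]

lemma sq_le_sinPeak {S β : ℝ} (hS : 0 ≤ S) (hSC : S ≤ C) (hSsin : S * |sin (π * β)| ≤ 1) :
    S ^ 2 ≤ sinPeak C β := by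
  have hsq : (S * sin (π * β)) ^ 2 ≤ 1 := by
    rw [← sq_abs, abs_mul, abs_of_nonneg hS]
    nlinarith [abs_nonneg (sin (π * β)), mul_nonneg hS (abs_nonneg (sin (π * β)))]
  rw [sinPeak, le_div_iff₀ (by positivity)]
  nlinarith [mul_le_mul_of_nonneg_left hsq (sq_nonneg C), mul_le_mul hSC hSC hS (hS.trans hSC)]

lemma sinPeak_le_of_abs_le_half {β : ℝ} (hβ : |β| ≤ 1 / 2) :
    sinPeak C β ≤ 2 * C ^ 2 / (1 + (2 * C * β) ^ 2) := by
  have hsin : (2 * β) ^ 2 ≤ sin (π * β) ^ 2 := by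
    rw [← sq_abs, ← sq_abs (sin _), abs_mul, abs_two]
    exact pow_le_pow_left₀ (by positivity) (two_mul_abs_le_abs_sin_pi_mul hβ) 2
  unfold sinPeak
  gcongr
  nlinarith [sq_nonneg C]

lemma integral_sinPeak_le (hC : 0 < C) : ∫ β in (0 : ℝ)..1, sinPeak C β ≤ π * C := by
  have hlorentz : ∫ β in (-(1 / 2) : ℝ)..(1 / 2), 2 * C ^ 2 / (1 + (2 * C * β) ^ 2)
      = C * (2 * arctan C) := by
    simp_rw [div_eq_mul_one_div (2 * C ^ 2)]
    rw [intervalIntegral.integral_const_mul,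
      integral_comp_mul_left (fun x ↦ 1 / (1 + x ^ 2)) (by positivity),
      integral_one_div_one_add_sq, smul_eq_mul, show 2 * C * (-(1 / 2)) = -C by ring,
      show 2 * C * (1 / 2) = C by ring, arctan_neg]
    field_simp
    ring
  calc ∫ β in (0 : ℝ)..1, sinPeak C β = ∫ β in (-(1 / 2) : ℝ)..(1 / 2), sinPeak C β := by
        convert ((periodic_sinPeak C).intervalIntegral_add_eq 0 (-(1 / 2))) using 2 <;> norm_num
    _ ≤ ∫ β in (-(1 / 2) : ℝ)..(1 / 2), 2 * C ^ 2 / (1 + (2 * C * β) ^ 2) := by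
        refine integral_mono_on (by norm_num) ((continuous_sinPeak C).intervalIntegrable _ _)
          (Continuous.intervalIntegrable
            (continuous_const.div (by fun_prop) fun _ ↦ by positivity) _ _) fun β hβ ↦ ?_
        exact sinPeak_le_of_abs_le_half (abs_le.mpr hβ)
    _ ≤ π * C := by
        rw [hlorentz]
        nlinarith [arctan_lt_pi_div_two C]

end sinPeak

lemma integral_sinPeak_mul_le {C m a b : ℝ} (hC : 0 < C) (hm : 0 < m) (hab : a ≤ b) :
    ∫ α in a..b, sinPeak C (m * α) ≤ (b - a + 2 / m) * (π * C) := by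
  rw [integral_comp_mul_left (sinPeak C) hm.ne', smul_eq_mul]
  calc m⁻¹ * ∫ β in m * a..m * b, sinPeak C β
      ≤ m⁻¹ * ((m * b - m * a) / 1 + 2) * ∫ β in (0 : ℝ)..1, sinPeak C β := by
        rw [mul_assoc]
        gcongr
        exact (periodic_sinPeak C).intervalIntegral_le_of_nonneg one_pos
          (continuous_sinPeak C).intervalIntegrable (sinPeak_nonneg C) (by gcongr)
    _ ≤ (b - a + 2 / m) * (π * C) := by
        have : m⁻¹ * ((m * b - m * a) / 1 + 2) = b - a + 2 / m := by field_simp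
        rw [this]
        exact mul_le_mul_of_nonneg_left (integral_sinPeak_le hC) (by linarith [div_pos two_pos hm])

lemma expSum_sq_le_sinPeak (j : ℤ) {α C : ℝ} (hα : 0 < α) (hα1 : α ≤ 1) (hC : 2 / α ≤ C) :
    expSum j α ^ 2 ≤ sinPeak C (|(j : ℝ)| * α) := by
  refine sq_le_sinPeak (expSum_nonneg j α)
    ((expSum_le_K j α).trans ((K_le_two_div hα hα1).trans hC)) ?_
  rw [show |(j : ℝ)| * α = |j * α| by rw [abs_mul, abs_of_pos hα], abs_sin_pi_mul_abs,
    expSum_mul_abs_sin]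
  exact abs_sin_le_one _

lemma integral_expSum_sq_le_of_small {j : ℤ} (hj : j ≠ 0) {a : ℝ} (ha : 0 < a)
    (hsmall : |(j : ℝ)| * a ≤ 1 / 4) : ∫ α in a..2 * a, expSum j α ^ 2 ≤ a * (π / 2) ^ 2 := by
  calc ∫ α in a..2 * a, expSum j α ^ 2 ≤ ∫ _ in a..2 * a, (π / 2) ^ 2 := by
        refine integral_mono_on_of_nonneg (by linarith) (fun α _ ↦ sq_nonneg _)
          intervalIntegrable_const fun α ⟨haα, hα2a⟩ ↦ ?_
        have hα : 0 < α := ha.trans_le haα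
        have : |(j : ℝ)| * α ≤ 1 / 2 := by nlinarith [abs_nonneg (j : ℝ)]
        exact pow_le_pow_left₀ (expSum_nonneg j α) (expSum_le_pi_div_two hj hα this) 2
    _ = a * (π / 2) ^ 2 := by rw [intervalIntegral.integral_const, smul_eq_mul]; ring

lemma integral_expSum_sq_le_of_large {j : ℤ} {a : ℝ} (ha : 0 < a) (ha1 : 2 * a ≤ 1)
    (hlarge : 1 / 4 ≤ |(j : ℝ)| * a) : ∫ α in a..2 * a, expSum j α ^ 2 ≤ 18 * π := by
  have hj : 0 < |(j : ℝ)| := pos_of_mul_pos_left (by linarith) ha.le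
  calc ∫ α in a..2 * a, expSum j α ^ 2 ≤ ∫ α in a..2 * a, sinPeak (2 / a) (|(j : ℝ)| * α) := by
        refine integral_mono_on_of_nonneg (by linarith) (fun α _ ↦ sq_nonneg _)
          (((continuous_sinPeak _).comp (continuous_const_mul _)).intervalIntegrable _ _)
          fun α ⟨haα, hα2a⟩ ↦ ?_
        have hα : 0 < α := ha.trans_le haα
        exact expSum_sq_le_sinPeak j hα (by linarith) (div_le_div_of_nonneg_left zero_le_two ha haα)
    _ ≤ (2 * a - a + 2 / |(j : ℝ)|) * (π * (2 / a)) :=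
        integral_sinPeak_mul_le (by positivity) hj (by linarith)
    _ = 2 * π + 4 * π / (|(j : ℝ)| * a) := by field_simp; ring
    _ ≤ 18 * π := by
        have : 4 * π / (|(j : ℝ)| * a) ≤ 16 * π := by
          rw [div_le_iff₀ (by positivity)]; nlinarith [pi_pos]
        linarith

lemma integral_expSum_sq_le {j : ℤ} (hj : j ≠ 0) {a : ℝ} (ha : 0 < a) (ha1 : 2 * a ≤ 1) :
    ∫ α in a..2 * a, expSum j α ^ 2 ≤ 18 * π := by
  rcases le_total (|(j : ℝ)| * a) (1 / 4) with hsmall | hlarge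
  · have := integral_expSum_sq_le_of_small hj ha hsmall
    nlinarith [pi_le_four, pi_pos]
  · exact integral_expSum_sq_le_of_large ha ha1 hlarge

/-- For every nonzero integer `j`, `E(j; N) ≤ 2^(ℓ+8)`. -/
theorem E_bound (ℓ N : ℕ) (hN : 2 ^ (ℓ + 1) ≤ N) (j : ℤ) (hj : j ≠ 0) :
    E ℓ N j ≤ 2 ^ (ℓ + 8) := by
  set a : ℝ := 2 ^ ℓ / N
  have hN0 : (0 : ℝ) < N := by exact_mod_cast (Nat.pow_pos two_pos).trans_le hN
  have ha : 0 < a := by positivity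
  have h2a : (2 : ℝ) ^ (ℓ + 1) / N = 2 * a := by rw [pow_succ]; ring
  have ha1 : 2 * a ≤ 1 := by
    rw [← h2a, div_le_one hN0]
    exact_mod_cast hN
  calc E ℓ N j = ∫ α in a..2 * a, expSum j α ^ 2 := by rw [E, h2a]; rfl
    _ ≤ 18 * π := integral_expSum_sq_le hj ha ha1
    _ ≤ 2 ^ (ℓ + 8) := by
        rw [pow_add]
        nlinarith [one_le_pow₀ (M₀ := ℝ) (n := ℓ) one_le_two, pi_le_four]
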